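/- arXiv:2404.14758 — 2 statements merged into one kernel-verified Lean document; each statement's English description precedes it below -/
import Mathlib

section
/- For real numbers p, q > 0 with 1/2 ≤ p/q ≤ 2, one has (ln(p/q))² ≤ max{ ln(1 + (p/q − 1)²), ln(1 + (q/p − 1)²) }. -/
lemma log_le_half_sub_inv {x : ℝ} (hx : 1 ≤ x) : Real.log x ≤ (x - x⁻¹) / 2 := by
  rcases eq_or_lt_of_le hx with h | h
  · simp [← h]
  · have hlog : 0 < Real.log x := Real.log_pos h
    have := (Real.self_lt_sinh_iff (x := Real.log x)).2 hlog
    have hx0 : 0 < x := by linarith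
    rw [Real.sinh_eq, Real.exp_log hx0, Real.exp_neg, Real.exp_log hx0] at this
    linarith

lemma key_ineq {x : ℝ} (h1 : 1 ≤ x) (h2 : x ≤ 2) :
    (Real.log x) ^ 2 ≤ Real.log (1 + (x - 1) ^ 2) := by
  have hx0 : (0:ℝ) < x := by linarith
  set s := Real.sqrt x with hs
  have hs1 : 1 ≤ s := by
    rw [hs, show (1:ℝ) = Real.sqrt 1 by simp]
    exact Real.sqrt_le_sqrt h1
  have hs0 : 0 < s := by linarith
  have hss : s * s = x := Real.mul_self_sqrt (by linarith)
  have hlogs : Real.log x = 2 * Real.log s := by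
    rw [← hss, Real.log_mul (ne_of_gt hs0) (ne_of_gt hs0)]; ring
  have hA : Real.log s ≤ (s - s⁻¹) / 2 := log_le_half_sub_inv hs1
  have hlog_nonneg : 0 ≤ Real.log x := Real.log_nonneg h1
  have hup : Real.log x ≤ s - s⁻¹ := by rw [hlogs]; linarith
  have hsq : (Real.log x) ^ 2 ≤ (s - s⁻¹) ^ 2 := by
    have h1' : 0 ≤ s - s⁻¹ := by
      have : s⁻¹ ≤ 1 := by
        rw [inv_le_one_iff₀]; right; exact hs1
      linarith
    nlinarith
  have hinv : s * s⁻¹ = 1 := mul_inv_cancel₀ (ne_of_gt hs0)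
  have hexp : (s - s⁻¹) ^ 2 = (x - 1) ^ 2 / x := by
    have hxinv : x * x⁻¹ = 1 := mul_inv_cancel₀ (ne_of_gt hx0)
    field_simp
    rw [← hss]; ring
  have hd : (0:ℝ) < 1 + (x - 1) ^ 2 := by nlinarith
  have hstep : (x - 1) ^ 2 / x ≤ 1 - (1 + (x - 1) ^ 2)⁻¹ := by
    have h1d : 1 - (1 + (x - 1) ^ 2)⁻¹ = (x - 1) ^ 2 / (1 + (x - 1) ^ 2) := by
      field_simp
      ring
    rw [h1d, div_le_div_iff₀ hx0 hd]
    nlinarith [mul_nonneg (mul_nonneg (sq_nonneg (x - 1)) (sub_nonneg.2 h1)) (sub_nonneg.2 h2)]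
  have hlow : 1 - (1 + (x - 1) ^ 2)⁻¹ ≤ Real.log (1 + (x - 1) ^ 2) :=
    Real.one_sub_inv_le_log_of_pos hd
  calc (Real.log x) ^ 2 ≤ (s - s⁻¹) ^ 2 := hsq
    _ = (x - 1) ^ 2 / x := hexp
    _ ≤ 1 - (1 + (x - 1) ^ 2)⁻¹ := hstep
    _ ≤ Real.log (1 + (x - 1) ^ 2) := hlow

theorem stmt_5 (p q : ℝ) (hp : 0 < p) (hq : 0 < q)
    (hlow : 1 / 2 ≤ p / q) (hup : p / q ≤ 2) :
    (Real.log (p / q)) ^ 2 ≤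
      max (Real.log (1 + (p / q - 1) ^ 2)) (Real.log (1 + (q / p - 1) ^ 2)) := by
  have hx0 : 0 < p / q := div_pos hp hq
  have hinv : q / p = (p / q)⁻¹ := by
    rw [inv_div]
  rcases le_or_gt 1 (p / q) with h1 | h1
  · exact le_trans (key_ineq h1 hup) (le_max_left _ _)
  · have hqp1 : 1 ≤ q / p := by
      rw [hinv, le_inv_comm₀ one_pos hx0]
      simpa using h1.le
    have hqp2 : q / p ≤ 2 := by
      rw [hinv]
      rw [inv_le_comm₀ hx0 (by norm_num)]
      linarith [hlow]
    have hlogeq : Real.log (p / q) ^ 2 = Real.log (q / p) ^ 2 := by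
      rw [hinv, Real.log_inv]; ring
    rw [hlogeq]
    exact le_trans (key_ineq hqp1 hqp2) (le_max_right _ _)
end

section
/- Let X be a real-valued random variable with E[X] ≤ 0 and X ≤ R almost surely, for some R > 0. Then for any θ > 0, E[e^{θX}] ≤ exp( h(R)·E[X²] ), where h(R) = (e^{θR} − θR − 1)/R². -/
open MeasureTheory

private lemma exp_ge_quad {v : ℝ} (hv : 0 ≤ v) : 1 + v + v ^ 2 / 2 ≤ Real.exp v := by
  have hmono : Monotone (fun u => Real.exp u - u - u ^ 2 / 2 - 1) := by
    apply monotone_of_hasDerivAt_nonneg (f' := fun u => Real.exp u - 1 - u)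
    · intro u
      have h1 : HasDerivAt Real.exp (Real.exp u) u := Real.hasDerivAt_exp u
      have := ((h1.sub (hasDerivAt_id u)).sub
        (((hasDerivAt_pow 2 u).div_const 2))).sub_const 1
      exact this.congr_deriv (by ring)
    · intro u
      have := Real.add_one_le_exp u
      simp only [Pi.zero_apply]; linarith
  have := hmono hv
  simp at this; linarith

private lemma exp_le_quad {u : ℝ} (hu : u ≤ 0) : Real.exp u ≤ 1 + u + u ^ 2 / 2 := by
  have hanti : Antitone (fun u => 1 + u + u ^ 2 / 2 - Real.exp u) := by
    apply antitone_of_hasDerivAt_nonpos (f' := fun u => 1 + u - Real.exp u)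
    · intro u
      have h1 : HasDerivAt Real.exp (Real.exp u) u := Real.hasDerivAt_exp u
      have := (((hasDerivAt_const u (1:ℝ)).add (hasDerivAt_id u)).add
        ((hasDerivAt_pow 2 u).div_const 2)).sub h1
      exact this.congr_deriv (by ring)
    · intro u
      have := Real.add_one_le_exp u
      simp only [Pi.zero_apply]; linarith
  have := hanti hu
  simp at this; linarith

private lemma p_nonneg {u : ℝ} (hu : 0 ≤ u) : 0 ≤ (u - 2) * Real.exp u + u + 2 := by
  have hp' : ∀ x : ℝ, 0 ≤ x → 0 ≤ (x - 1) * Real.exp x + 1 := by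
    intro x hx
    have hmono : MonotoneOn (fun y => (y - 1) * Real.exp y + 1) (Set.Ici (0:ℝ)) := by
      apply monotoneOn_of_hasDerivWithinAt_nonneg (convex_Ici 0)
        (f' := fun y => y * Real.exp y)
      · fun_prop
      · intro y _
        have h1 : HasDerivAt (fun y : ℝ => (y - 1) * Real.exp y + 1)
            (1 * Real.exp y + (y - 1) * Real.exp y) y :=
          (((hasDerivAt_id y).sub_const 1).mul (Real.hasDerivAt_exp y)).add_const 1
        have h2 : 1 * Real.exp y + (y - 1) * Real.exp y = y * Real.exp y := by ring
        exact (h2 ▸ h1).hasDerivWithinAt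
      · intro y hy
        rw [interior_Ici] at hy
        exact mul_nonneg (le_of_lt hy) (Real.exp_pos y).le
    have := hmono (Set.self_mem_Ici) (Set.mem_Ici.2 hx) hx
    simpa using this
  have hmono : MonotoneOn (fun y => (y - 2) * Real.exp y + y + 2) (Set.Ici (0:ℝ)) := by
    apply monotoneOn_of_hasDerivWithinAt_nonneg (convex_Ici 0)
      (f' := fun y => (y - 1) * Real.exp y + 1)
    · fun_prop
    · intro y _
      have h1 : HasDerivAt (fun y : ℝ => (y - 2) * Real.exp y + y + 2)
          (1 * Real.exp y + (y - 2) * Real.exp y + 1) y :=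
        ((((hasDerivAt_id y).sub_const 2).mul (Real.hasDerivAt_exp y)).add
          (hasDerivAt_id y)).add_const 2
      have h2 : 1 * Real.exp y + (y - 2) * Real.exp y + 1 = (y - 1) * Real.exp y + 1 := by ring
      exact (h2 ▸ h1).hasDerivWithinAt
    · intro y hy
      rw [interior_Ici] at hy
      exact hp' y hy.le
  have := hmono (Set.self_mem_Ici) (Set.mem_Ici.2 hu) hu
  simpa using this

private lemma g_mono : MonotoneOn (fun u => (Real.exp u - u - 1) / u ^ 2) (Set.Ioi (0:ℝ)) := by
  apply monotoneOn_of_hasDerivWithinAt_nonneg (convex_Ioi 0)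
    (f' := fun u => ((Real.exp u - 1) * u ^ 2 - (Real.exp u - u - 1) * (2 * u)) / (u ^ 2) ^ 2)
  · apply ContinuousOn.div (by fun_prop) (by fun_prop)
    intro u hu
    have : (0:ℝ) < u := hu
    positivity
  · intro u hu
    rw [interior_Ioi] at hu
    have hu0 : (u:ℝ) ≠ 0 := ne_of_gt hu
    have h1 : HasDerivAt (fun u : ℝ => Real.exp u - u - 1) (Real.exp u - 1) u := by
      have := ((Real.hasDerivAt_exp u).sub (hasDerivAt_id u)).sub_const 1
      simpa using this
    have h2 : HasDerivAt (fun u : ℝ => u ^ 2) (2 * u) u := by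
      simpa using hasDerivAt_pow 2 u
    exact ((h1.div h2 (by positivity)).hasDerivWithinAt)
  · intro u hu
    rw [interior_Ioi] at hu
    have hp := p_nonneg hu.le
    have hnum : (Real.exp u - 1) * u ^ 2 - (Real.exp u - u - 1) * (2 * u)
        = u * ((u - 2) * Real.exp u + u + 2) := by ring
    rw [hnum]
    have hu' : (0:ℝ) < u := hu
    exact div_nonneg (mul_nonneg hu'.le hp) (by positivity)

private lemma key_ineq_s6 {u v : ℝ} (huv : u ≤ v) (hv : 0 < v) :
    v ^ 2 * (Real.exp u - u - 1) ≤ u ^ 2 * (Real.exp v - v - 1) := by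
  rcases le_or_gt u 0 with hu | hu
  · have h1 := exp_le_quad hu
    have h2 := exp_ge_quad hv.le
    nlinarith [sq_nonneg u, sq_nonneg v, sq_nonneg (u*v)]
  · have := g_mono (Set.mem_Ioi.2 hu) (Set.mem_Ioi.2 hv) huv
    rw [div_le_div_iff₀ (by positivity) (by positivity)] at this
    nlinarith [this]

theorem stmt_6 {Ω : Type*} [MeasurableSpace Ω] (μ : Measure Ω) [IsProbabilityMeasure μ]
    (X : Ω → ℝ) (R θ : ℝ) (hR : 0 < R) (hθ : 0 < θ)
    (hint : Integrable X μ) (hint2 : Integrable (fun ω => X ω ^ 2) μ)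
    (hintexp : Integrable (fun ω => Real.exp (θ * X ω)) μ)
    (hmean : ∫ ω, X ω ∂μ ≤ 0)
    (hbdd : ∀ᵐ ω ∂μ, X ω ≤ R) :
    ∫ ω, Real.exp (θ * X ω) ∂μ ≤
      Real.exp ((Real.exp (θ * R) - θ * R - 1) / R ^ 2 * ∫ ω, X ω ^ 2 ∂μ) := by
  set h : ℝ := (Real.exp (θ * R) - θ * R - 1) / R ^ 2 with hh_def
  have hh : 0 ≤ h := by
    apply div_nonneg _ (by positivity)
    have := Real.add_one_le_exp (θ * R)
    linarith
  have hI2 : 0 ≤ ∫ ω, X ω ^ 2 ∂μ := integral_nonneg fun ω => sq_nonneg _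
  have hpt : ∀ᵐ ω ∂μ, Real.exp (θ * X ω) ≤ 1 + θ * X ω + h * X ω ^ 2 := by
    filter_upwards [hbdd] with ω hω
    have hkey := key_ineq_s6 (mul_le_mul_of_nonneg_left hω hθ.le) (by positivity : 0 < θ * R)
    have hR2 : (0:ℝ) < R ^ 2 := by positivity
    have hθ2 : (0:ℝ) < θ ^ 2 := by positivity
    have h2 : Real.exp (θ * X ω) - θ * X ω - 1 ≤
        (Real.exp (θ * R) - θ * R - 1) * X ω ^ 2 / R ^ 2 := by
      rw [le_div_iff₀ hR2]
      nlinarith [hkey]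
    rw [hh_def, div_mul_eq_mul_div]
    linarith
  have hIrhs1 : Integrable (fun ω => 1 + θ * X ω) μ :=
    (integrable_const 1).add (hint.const_mul θ)
  have hIrhs : Integrable (fun ω => 1 + θ * X ω + h * X ω ^ 2) μ :=
    hIrhs1.add (hint2.const_mul h)
  calc ∫ ω, Real.exp (θ * X ω) ∂μ
      ≤ ∫ ω, (1 + θ * X ω + h * X ω ^ 2) ∂μ := integral_mono_ae hintexp hIrhs hpt
    _ = 1 + θ * ∫ ω, X ω ∂μ + h * ∫ ω, X ω ^ 2 ∂μ := by
        rw [integral_add hIrhs1 (hint2.const_mul h),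
          integral_add (integrable_const 1) (hint.const_mul θ), integral_const,
          integral_const_mul, integral_const_mul]
        simp
    _ ≤ 1 + h * ∫ ω, X ω ^ 2 ∂μ := by nlinarith
    _ ≤ Real.exp (h * ∫ ω, X ω ^ 2 ∂μ) := by
        have := Real.add_one_le_exp (h * ∫ ω, X ω ^ 2 ∂μ)
        linarith
end
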